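/- arXiv:2205.02988 — 4 statements merged into one kernel-verified Lean document; each statement's English description precedes it below -/
import Mathlib

section
/- If t and g are complex numbers satisfying (x - t^2)·g = 1 and t^3/3 - x·t = -y, then g satisfies the cubic equation (9y^2 - 4x^3)·g^3 + 3x·g + 1 = 0. -/
/-! With `3y = 3xt - t³`, the discriminant factors as `9y² - 4x³ = (x - t²)² (t² - 4x)`.
Multiplying by `g³` and using `(x - t²) g = 1` leaves `(t² - 4x) g`, and then
`(t² - 4x) g + 3x g + 1 = (t² - x) g + 1 = 0`. -/

section CommRing

variable {R : Type*} [CommRing R]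

theorem sq_sub_four_mul_cube_eq (x t : R) :
    (3 * x * t - t ^ 3) ^ 2 - 4 * x ^ 3 = (x - t ^ 2) ^ 2 * (t ^ 2 - 4 * x) := by
  ring

theorem cubic_eq_zero_of_mul_eq_one {x t g : R} (h : (x - t ^ 2) * g = 1) :
    ((3 * x * t - t ^ 3) ^ 2 - 4 * x ^ 3) * g ^ 3 + 3 * x * g + 1 = 0 :=
  calc ((3 * x * t - t ^ 3) ^ 2 - 4 * x ^ 3) * g ^ 3 + 3 * x * g + 1
      = ((x - t ^ 2) * g) ^ 2 * ((t ^ 2 - 4 * x) * g) + 3 * x * g + 1 := by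
        rw [sq_sub_four_mul_cube_eq]; ring
    _ = (t ^ 2 - x) * g + 1 := by rw [h]; ring
    _ = 0 := by linear_combination -h

end CommRing

theorem airy_cubic_for_g (x y t g : ℂ)
    (h1 : (x - t ^ 2) * g = 1)
    (h2 : t ^ 3 / 3 - x * t = -y) :
    (9 * y ^ 2 - 4 * x ^ 3) * g ^ 3 + 3 * x * g + 1 = 0 := by
  have hy : 3 * y = 3 * x * t - t ^ 3 := by linear_combination 3 * h2
  calc (9 * y ^ 2 - 4 * x ^ 3) * g ^ 3 + 3 * x * g + 1
      = ((3 * y) ^ 2 - 4 * x ^ 3) * g ^ 3 + 3 * x * g + 1 := by ring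
    _ = 0 := by rw [hy]; exact cubic_eq_zero_of_mul_eq_one h1
end

section
/- Conversely, if g is a nonzero complex number satisfying (9y^2 - 4x^3)·g^3 + 3x·g + 1 = 0, then there exists a complex number t with (x - t^2)·g = 1 and t^3/3 - x·t = -y. -/
theorem airy_cubic_converse (x y g : ℂ) (hg : g ≠ 0)
    (h : (9 * y ^ 2 - 4 * x ^ 3) * g ^ 3 + 3 * x * g + 1 = 0) :
    ∃ t : ℂ, (x - t ^ 2) * g = 1 ∧ t ^ 3 / 3 - x * t = -y := by
  by_cases hx : 2 * x * g + 1 = 0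
  · have h9 : 9 * y ^ 2 * g ^ 3 = 0 := by
      linear_combination h - (-2 * x^2 * g^2 + x * g + 1) * hx
    have hy : y = 0 := by
      simpa [hg, pow_eq_zero_iff, mul_eq_zero] using h9
    obtain ⟨t, ht⟩ := IsAlgClosed.exists_pow_nat_eq (-3 / (2 * g)) (n := 2) (by norm_num)
    refine ⟨t, ?_, ?_⟩
    · rw [ht]
      field_simp
      linear_combination hx
    · rw [hy]
      have h2 : t ^ 3 = t * t ^ 2 := by ring
      rw [h2, ht]
      field_simp
      linear_combination (-t) * hx
  · refine ⟨3 * y * g / (2 * x * g + 1), ?_, ?_⟩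
    · have hx' : x * g * 2 + 1 ≠ 0 := by contrapose! hx; linear_combination hx
      field_simp
      linear_combination -h
    · have hx' : g * 2 * x + 1 ≠ 0 := by contrapose! hx; linear_combination hx
      field_simp
      linear_combination y * h
end

section
/- Any holomorphic local solution g(x,y) of the cubic equation (9y^2 - 4x^3)·g(x,y)^3 + 3x·g(x,y) + 1 = 0 (on a domain where the equation defines g implicitly with 3(9y^2-4x^3)g^2 + 3x ≠ 0) satisfies the partial differential equation (-∂²/∂x² + x·∂²/∂y²)g = 0. -/
/-!
Differentiating the cubic `(9y² - 4x³)g³ + 3xg + 1 = 0` implicitly, once and twice in each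
variable, gives relations in which `g_x, g_y, g_xx, g_yy` all appear multiplied by
`D = 3(9y² - 4x³)g² + 3x`, the derivative of the cubic in `g`. Eliminating the first
derivatives, `D³ (-g_xx + x g_yy)` becomes a multiple of the cubic, hence vanishes, and `D ≠ 0`.
-/

open Filter Topology

noncomputable section PartialDeriv

variable {𝕜 E : Type*} [NontriviallyNormedField 𝕜] [NormedAddCommGroup E] [NormedSpace 𝕜 E]

def partialFst (f : 𝕜 → 𝕜 → E) (x y : 𝕜) : E := deriv (fun x' => f x' y) x

def partialSnd (f : 𝕜 → 𝕜 → E) (x y : 𝕜) : E := deriv (f x) y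

lemma DifferentiableAt.hasDerivAt_comp_prodMk_left {F : 𝕜 × 𝕜 → E} {a b : 𝕜}
    (h : DifferentiableAt 𝕜 F (a, b)) :
    HasDerivAt (fun x => F (x, b)) (fderiv 𝕜 F (a, b) (1, 0)) a :=
  h.hasFDerivAt.comp_hasDerivAt a ((hasDerivAt_id a).prodMk (hasDerivAt_const a b))

lemma DifferentiableAt.hasDerivAt_comp_prodMk_right {F : 𝕜 × 𝕜 → E} {a b : 𝕜}
    (h : DifferentiableAt 𝕜 F (a, b)) :
    HasDerivAt (fun y => F (a, y)) (fderiv 𝕜 F (a, b) (0, 1)) b :=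
  h.hasFDerivAt.comp_hasDerivAt b ((hasDerivAt_const b a).prodMk (hasDerivAt_id b))

variable {f : 𝕜 → 𝕜 → E} {U : Set (𝕜 × 𝕜)} {p : 𝕜 × 𝕜}

lemma DifferentiableOn.hasDerivAt_partialFst (hf : DifferentiableOn 𝕜 (fun q => f q.1 q.2) U)
    (hU : IsOpen U) (hp : p ∈ U) :
    HasDerivAt (fun x => f x p.2) (partialFst f p.1 p.2) p.1 :=
  ((hf.differentiableAt (hU.mem_nhds hp)).hasDerivAt_comp_prodMk_left).differentiableAt.hasDerivAt

lemma DifferentiableOn.hasDerivAt_partialSnd (hf : DifferentiableOn 𝕜 (fun q => f q.1 q.2) U)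
    (hU : IsOpen U) (hp : p ∈ U) :
    HasDerivAt (fun y => f p.1 y) (partialSnd f p.1 p.2) p.2 :=
  ((hf.differentiableAt (hU.mem_nhds hp)).hasDerivAt_comp_prodMk_right).differentiableAt.hasDerivAt

lemma contDiffOn_partialFst {n m : WithTop ℕ∞} (hf : ContDiffOn 𝕜 n (fun q => f q.1 q.2) U)
    (hU : IsOpen U) (hmn : m + 1 ≤ n) :
    ContDiffOn 𝕜 m (fun q => partialFst f q.1 q.2) U := by
  refine ((hf.fderiv_of_isOpen hU hmn).clm_apply (contDiffOn_const (c := ((1 : 𝕜), (0 : 𝕜))))).congr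
    fun q hq => ?_
  have hn : n ≠ 0 := (zero_lt_one.trans_le (le_add_self.trans hmn)).ne'
  have hfq := (hf.differentiableOn hn).differentiableAt (hU.mem_nhds hq)
  exact hfq.hasDerivAt_comp_prodMk_left.deriv

lemma contDiffOn_partialSnd {n m : WithTop ℕ∞} (hf : ContDiffOn 𝕜 n (fun q => f q.1 q.2) U)
    (hU : IsOpen U) (hmn : m + 1 ≤ n) :
    ContDiffOn 𝕜 m (fun q => partialSnd f q.1 q.2) U := by
  refine ((hf.fderiv_of_isOpen hU hmn).clm_apply (contDiffOn_const (c := ((0 : 𝕜), (1 : 𝕜))))).congr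
    fun q hq => ?_
  have hn : n ≠ 0 := (zero_lt_one.trans_le (le_add_self.trans hmn)).ne'
  have hfq := (hf.differentiableOn hn).differentiableAt (hU.mem_nhds hq)
  exact hfq.hasDerivAt_comp_prodMk_right.deriv

lemma IsOpen.eventually_prodMk_left_mem (hU : IsOpen U) (hp : p ∈ U) :
    ∀ᶠ x in 𝓝 p.1, (x, p.2) ∈ U :=
  (continuous_id.prodMk continuous_const).continuousAt.preimage_mem_nhds (hU.mem_nhds hp)

lemma IsOpen.eventually_prodMk_right_mem (hU : IsOpen U) (hp : p ∈ U) :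
    ∀ᶠ y in 𝓝 p.2, (p.1, y) ∈ U :=
  (continuous_const.prodMk continuous_id).continuousAt.preimage_mem_nhds (hU.mem_nhds hp)

lemma HasDerivAt.eq_zero_of_eventually_eq_zero {φ : 𝕜 → E} {φ' : E} {t : 𝕜}
    (h : HasDerivAt φ φ' t) (h0 : ∀ᶠ s in 𝓝 t, φ s = 0) : φ' = 0 :=
  h.unique ((hasDerivAt_const t 0).congr_of_eventuallyEq h0)

end PartialDeriv

section AiryCubic

variable {𝕜 : Type*} [NontriviallyNormedField 𝕜] {U : Set (𝕜 × 𝕜)} {g : 𝕜 → 𝕜 → 𝕜}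

lemma cubic_partialFst (hU : IsOpen U) (hg : DifferentiableOn 𝕜 (fun q => g q.1 q.2) U)
    (hcubic : ∀ p ∈ U,
      (9 * p.2 ^ 2 - 4 * p.1 ^ 3) * g p.1 p.2 ^ 3 + 3 * p.1 * g p.1 p.2 + 1 = 0) :
    ∀ p ∈ U, -12 * p.1 ^ 2 * g p.1 p.2 ^ 3
      + (3 * (9 * p.2 ^ 2 - 4 * p.1 ^ 3) * g p.1 p.2 ^ 2 + 3 * p.1) * partialFst g p.1 p.2
      + 3 * g p.1 p.2 = 0 := by
  rintro ⟨a, b⟩ hp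
  have hgx := hg.hasDerivAt_partialFst hU hp
  have hd : HasDerivAt (fun x => (9 * b ^ 2 - 4 * x ^ 3) * g x b ^ 3 + 3 * x * g x b + 1)
      (-12 * a ^ 2 * g a b ^ 3
        + (3 * (9 * b ^ 2 - 4 * a ^ 3) * g a b ^ 2 + 3 * a) * partialFst g a b + 3 * g a b) a := by
    refine (((((hasDerivAt_pow 3 a).const_mul 4).const_sub (9 * b ^ 2)).mul (hgx.pow 3)).add
      (((hasDerivAt_id a).const_mul 3).mul hgx)).add_const 1 |>.congr_deriv ?_
    simp only [Pi.pow_apply, id]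
    push_cast
    ring
  exact hd.eq_zero_of_eventually_eq_zero
    ((hU.eventually_prodMk_left_mem hp).mono fun x hx => hcubic (x, b) hx)

lemma cubic_partialSnd (hU : IsOpen U) (hg : DifferentiableOn 𝕜 (fun q => g q.1 q.2) U)
    (hcubic : ∀ p ∈ U,
      (9 * p.2 ^ 2 - 4 * p.1 ^ 3) * g p.1 p.2 ^ 3 + 3 * p.1 * g p.1 p.2 + 1 = 0) :
    ∀ p ∈ U, 18 * p.2 * g p.1 p.2 ^ 3
      + (3 * (9 * p.2 ^ 2 - 4 * p.1 ^ 3) * g p.1 p.2 ^ 2 + 3 * p.1) * partialSnd g p.1 p.2 = 0 := by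
  rintro ⟨a, b⟩ hp
  have hgy := hg.hasDerivAt_partialSnd hU hp
  have hd : HasDerivAt (fun y => (9 * y ^ 2 - 4 * a ^ 3) * g a y ^ 3 + 3 * a * g a y + 1)
      (18 * b * g a b ^ 3
        + (3 * (9 * b ^ 2 - 4 * a ^ 3) * g a b ^ 2 + 3 * a) * partialSnd g a b) b := by
    refine (((((hasDerivAt_pow 2 b).const_mul 9).sub_const (4 * a ^ 3)).mul (hgy.pow 3)).add
      (hgy.const_mul (3 * a))).add_const 1 |>.congr_deriv ?_
    simp only [Pi.pow_apply]
    push_cast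
    ring
  exact hd.eq_zero_of_eventually_eq_zero
    ((hU.eventually_prodMk_right_mem hp).mono fun y hy => hcubic (a, y) hy)

lemma cubic_partialFst_partialFst (hU : IsOpen U) (hg : DifferentiableOn 𝕜 (fun q => g q.1 q.2) U)
    (hgx : DifferentiableOn 𝕜 (fun q => partialFst g q.1 q.2) U)
    (hcubic_x : ∀ p ∈ U, -12 * p.1 ^ 2 * g p.1 p.2 ^ 3
      + (3 * (9 * p.2 ^ 2 - 4 * p.1 ^ 3) * g p.1 p.2 ^ 2 + 3 * p.1) * partialFst g p.1 p.2
      + 3 * g p.1 p.2 = 0) :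
    ∀ p ∈ U, -24 * p.1 * g p.1 p.2 ^ 3 - 72 * p.1 ^ 2 * g p.1 p.2 ^ 2 * partialFst g p.1 p.2
      + 6 * (9 * p.2 ^ 2 - 4 * p.1 ^ 3) * g p.1 p.2 * partialFst g p.1 p.2 ^ 2
      + 6 * partialFst g p.1 p.2
      + (3 * (9 * p.2 ^ 2 - 4 * p.1 ^ 3) * g p.1 p.2 ^ 2 + 3 * p.1)
        * partialFst (partialFst g) p.1 p.2 = 0 := by
  rintro ⟨a, b⟩ hp
  have hg' := hg.hasDerivAt_partialFst hU hp
  have hgx' := hgx.hasDerivAt_partialFst hU hp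
  have hd : HasDerivAt (fun x => -12 * x ^ 2 * g x b ^ 3
        + (3 * (9 * b ^ 2 - 4 * x ^ 3) * g x b ^ 2 + 3 * x) * partialFst g x b + 3 * g x b)
      (-24 * a * g a b ^ 3 - 72 * a ^ 2 * g a b ^ 2 * partialFst g a b
        + 6 * (9 * b ^ 2 - 4 * a ^ 3) * g a b * partialFst g a b ^ 2 + 6 * partialFst g a b
        + (3 * (9 * b ^ 2 - 4 * a ^ 3) * g a b ^ 2 + 3 * a) * partialFst (partialFst g) a b) a := by
    have hD := ((((hasDerivAt_pow 3 a).const_mul 4).const_sub (9 * b ^ 2)).const_mul 3).mul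
      (hg'.pow 2) |>.add ((hasDerivAt_id a).const_mul 3)
    refine ((((hasDerivAt_pow 2 a).const_mul (-12)).mul (hg'.pow 3)).add (hD.mul hgx')).add
      (hg'.const_mul 3) |>.congr_deriv ?_
    simp only [Pi.add_apply, Pi.mul_apply, Pi.pow_apply, id]
    push_cast
    ring
  exact hd.eq_zero_of_eventually_eq_zero
    ((hU.eventually_prodMk_left_mem hp).mono fun x hx => hcubic_x (x, b) hx)

lemma cubic_partialSnd_partialSnd (hU : IsOpen U) (hg : DifferentiableOn 𝕜 (fun q => g q.1 q.2) U)
    (hgy : DifferentiableOn 𝕜 (fun q => partialSnd g q.1 q.2) U)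
    (hcubic_y : ∀ p ∈ U, 18 * p.2 * g p.1 p.2 ^ 3
      + (3 * (9 * p.2 ^ 2 - 4 * p.1 ^ 3) * g p.1 p.2 ^ 2 + 3 * p.1) * partialSnd g p.1 p.2 = 0) :
    ∀ p ∈ U, 18 * g p.1 p.2 ^ 3 + 108 * p.2 * g p.1 p.2 ^ 2 * partialSnd g p.1 p.2
      + 6 * (9 * p.2 ^ 2 - 4 * p.1 ^ 3) * g p.1 p.2 * partialSnd g p.1 p.2 ^ 2
      + (3 * (9 * p.2 ^ 2 - 4 * p.1 ^ 3) * g p.1 p.2 ^ 2 + 3 * p.1)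
        * partialSnd (partialSnd g) p.1 p.2 = 0 := by
  rintro ⟨a, b⟩ hp
  have hg' := hg.hasDerivAt_partialSnd hU hp
  have hgy' := hgy.hasDerivAt_partialSnd hU hp
  have hd : HasDerivAt (fun y => 18 * y * g a y ^ 3
        + (3 * (9 * y ^ 2 - 4 * a ^ 3) * g a y ^ 2 + 3 * a) * partialSnd g a y)
      (18 * g a b ^ 3 + 108 * b * g a b ^ 2 * partialSnd g a b
        + 6 * (9 * b ^ 2 - 4 * a ^ 3) * g a b * partialSnd g a b ^ 2
        + (3 * (9 * b ^ 2 - 4 * a ^ 3) * g a b ^ 2 + 3 * a) * partialSnd (partialSnd g) a b) b := by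
    have hD := ((((hasDerivAt_pow 2 b).const_mul 9).sub_const (4 * a ^ 3)).const_mul 3).mul
      (hg'.pow 2) |>.add_const (3 * a)
    refine (((hasDerivAt_id b).const_mul 18).mul (hg'.pow 3)).add (hD.mul hgy') |>.congr_deriv ?_
    simp only [Pi.mul_apply, Pi.pow_apply, id]
    push_cast
    ring
  exact hd.eq_zero_of_eventually_eq_zero
    ((hU.eventually_prodMk_right_mem hp).mono fun y hy => hcubic_y (a, y) hy)

end AiryCubic

lemma airy_of_cubic_relations {R : Type*} [CommRing R] [NoZeroDivisors R]
    {x y g gx gy gxx gyy : R}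
    (hD : 3 * (9 * y ^ 2 - 4 * x ^ 3) * g ^ 2 + 3 * x ≠ 0)
    (h0 : (9 * y ^ 2 - 4 * x ^ 3) * g ^ 3 + 3 * x * g + 1 = 0)
    (hx : -12 * x ^ 2 * g ^ 3 + (3 * (9 * y ^ 2 - 4 * x ^ 3) * g ^ 2 + 3 * x) * gx + 3 * g = 0)
    (hy : 18 * y * g ^ 3 + (3 * (9 * y ^ 2 - 4 * x ^ 3) * g ^ 2 + 3 * x) * gy = 0)
    (hxx : -24 * x * g ^ 3 - 72 * x ^ 2 * g ^ 2 * gx + 6 * (9 * y ^ 2 - 4 * x ^ 3) * g * gx ^ 2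
      + 6 * gx + (3 * (9 * y ^ 2 - 4 * x ^ 3) * g ^ 2 + 3 * x) * gxx = 0)
    (hyy : 18 * g ^ 3 + 108 * y * g ^ 2 * gy + 6 * (9 * y ^ 2 - 4 * x ^ 3) * g * gy ^ 2
      + (3 * (9 * y ^ 2 - 4 * x ^ 3) * g ^ 2 + 3 * x) * gyy = 0) :
    -gxx + x * gyy = 0 := by
  have key : (3 * (9 * y ^ 2 - 4 * x ^ 3) * g ^ 2 + 3 * x) ^ 3 * (-gxx + x * gyy) = 0 := by
    linear_combination
      (54 * x * g * ((9 * y ^ 2 - 4 * x ^ 3) * g ^ 3 + 3 * x * g - 1)) * h0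
      + (-72 * x ^ 2 * g ^ 2 * (3 * (9 * y ^ 2 - 4 * x ^ 3) * g ^ 2 + 3 * x)
          + 6 * (9 * y ^ 2 - 4 * x ^ 3) * g
            * ((3 * (9 * y ^ 2 - 4 * x ^ 3) * g ^ 2 + 3 * x) * gx + (12 * x ^ 2 * g ^ 3 - 3 * g))
          + 6 * (3 * (9 * y ^ 2 - 4 * x ^ 3) * g ^ 2 + 3 * x)) * hx
      - x * (108 * y * g ^ 2 * (3 * (9 * y ^ 2 - 4 * x ^ 3) * g ^ 2 + 3 * x)
          + 6 * (9 * y ^ 2 - 4 * x ^ 3) * g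
            * ((3 * (9 * y ^ 2 - 4 * x ^ 3) * g ^ 2 + 3 * x) * gy - 18 * y * g ^ 3)) * hy
      - (3 * (9 * y ^ 2 - 4 * x ^ 3) * g ^ 2 + 3 * x) ^ 2 * hxx
      + x * (3 * (9 * y ^ 2 - 4 * x ^ 3) * g ^ 2 + 3 * x) ^ 2 * hyy
  exact (mul_eq_zero.mp key).resolve_left (pow_ne_zero 3 hD)

theorem borel_airy_pde_of_cubic
    (U : Set (ℂ × ℂ)) (hU : IsOpen U) (g : ℂ → ℂ → ℂ)
    (hsmooth : ContDiffOn ℂ ⊤ (fun p : ℂ × ℂ => g p.1 p.2) U)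
    (hcubic : ∀ p ∈ U, (9 * p.2 ^ 2 - 4 * p.1 ^ 3) * (g p.1 p.2) ^ 3
        + 3 * p.1 * g p.1 p.2 + 1 = 0)
    (hnd : ∀ p ∈ U, 3 * (9 * p.2 ^ 2 - 4 * p.1 ^ 3) * (g p.1 p.2) ^ 2 + 3 * p.1 ≠ 0) :
    ∀ p ∈ U,
      - deriv (fun x => deriv (fun x' => g x' p.2) x) p.1
        + p.1 * deriv (fun y => deriv (fun y' => g p.1 y') y) p.2 = 0 := by
  intro p hp
  have hg : DifferentiableOn ℂ (fun q => g q.1 q.2) U := hsmooth.differentiableOn (by simp)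
  have hgx : DifferentiableOn ℂ (fun q => partialFst g q.1 q.2) U :=
    (contDiffOn_partialFst (m := 1) hsmooth hU le_top).differentiableOn one_ne_zero
  have hgy : DifferentiableOn ℂ (fun q => partialSnd g q.1 q.2) U :=
    (contDiffOn_partialSnd (m := 1) hsmooth hU le_top).differentiableOn one_ne_zero
  have hcubic_x := cubic_partialFst hU hg hcubic
  have hcubic_y := cubic_partialSnd hU hg hcubic
  exact airy_of_cubic_relations (hnd p hp) (hcubic p hp) (hcubic_x p hp) (hcubic_y p hp)
    (cubic_partialFst_partialFst hU hg hgx hcubic_x p hp)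
    (cubic_partialSnd_partialSnd hU hg hgy hcubic_y p hp)
end

section
/- For the formal power series solution S = Σ_{j≥-1} η^{-j} S_j of the Riccati equation S' + S² = η²x with S_{-1} = x^{1/2}, the even part S_even = Σ_{j≥0} η^{-2j} S_{2j} satisfies S_even = -(1/2)·d/dx(log S_odd), i.e., 2·S_even·S_odd + d/dx(S_odd) = 0, where S_odd = Σ_{j≥-1} η^{-2j-1} S_{2j+1}. -/
/-!
The recursion at index `2m` expresses `S_{2m-1}'` through `S₋₁ S_{2m}` and the convolution
`∑_{k<2m} S_k S_{2m-1-k}`. That convolution is symmetric under `k ↦ 2m-1-k`, which swaps the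
parity of `k`, so it is twice its part over even `k`; adding the term `S₋₁ S_{2m}` gives
exactly the coefficient of `η^{1-2m}` in `2 S_even S_odd`.
-/

open Finset

theorem Finset.sum_range_two_mul {M : Type*} [AddCommMonoid M] (f : ℕ → M) (n : ℕ) :
    ∑ k ∈ range (2 * n), f k = ∑ j ∈ range n, (f (2 * j) + f (2 * j + 1)) := by
  induction n with
  | zero => simp
  | succ n ih =>
    rw [Nat.mul_succ, sum_range_succ, sum_range_succ, ih, sum_range_succ, add_assoc]

theorem Finset.sum_range_two_mul_of_reflect {M : Type*} [AddCommMonoid M] {g : ℕ → M} {n : ℕ}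
    (hg : ∀ k < 2 * n, g (2 * n - 1 - k) = g k) :
    ∑ k ∈ range (2 * n), g k = 2 • ∑ j ∈ range n, g (2 * j) := by
  have hodd : ∑ j ∈ range n, g (2 * j + 1) = ∑ j ∈ range n, g (2 * j) := by
    rw [← sum_range_reflect]
    refine sum_congr rfl fun j hj => ?_
    have hj : j < n := mem_range.mp hj
    rw [← hg _ (by omega)]
    congr 1
    omega
  rw [sum_range_two_mul, sum_add_distrib, hodd, two_nsmul]

theorem Finset.sum_range_two_mul_convolution {R : Type*} [CommSemiring R] (f : ℕ → R) (m : ℕ) :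
    ∑ k ∈ range (2 * m), f (k + 1) * f (2 * m - k)
      = 2 * ∑ j ∈ range m, f (2 * j + 1) * f (2 * m - 2 * j) := by
  rw [sum_range_two_mul_of_reflect, nsmul_eq_mul, Nat.cast_ofNat]
  intro k hk
  rw [mul_comm, show 2 * m - 1 - k + 1 = 2 * m - k by omega,
    show 2 * m - (2 * m - 1 - k) = k + 1 by omega]

/-- `A n` stands for the WKB coefficient `S_{n-1}` of the Riccati equation
`S' + S² = η² x` for the Airy equation, so `A 0 = S₋₁ = √x` and the recursion
`S_{j+1} = -(1/(2S₋₁))(S_j' + ∑_{k=0}^{j} S_k S_{j-k})`.  The conclusion is the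
coefficientwise (in powers of `η⁻¹`) form of `2·S_even·S_odd + (S_odd)' = 0`,
i.e. `S_even = -(1/2)·(log S_odd)'`. -/
theorem airy_Seven_eq_log_deriv_Sodd
    (A : ℕ → ℝ → ℝ)
    (hA0 : ∀ x : ℝ, 0 < x → A 0 x = Real.sqrt x)
    (hrec : ∀ (n : ℕ) (x : ℝ), 0 < x →
      A (n + 1) x = -(1 / (2 * A 0 x)) *
        (deriv (A n) x + ∑ k ∈ Finset.range n, A (k + 1) x * A (n - k) x)) :
    ∀ (m : ℕ) (x : ℝ), 0 < x →
      deriv (A (2 * m)) x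
        + 2 * ∑ j ∈ Finset.range (m + 1), A (2 * j + 1) x * A (2 * m - 2 * j) x = 0 := by
  intro m x hx
  have hA0_ne : A 0 x ≠ 0 := by
    rw [hA0 x hx]
    exact (Real.sqrt_pos.mpr hx).ne'
  have hrec_2m : deriv (A (2 * m)) x + 2 * A 0 x * A (2 * m + 1) x
      + ∑ k ∈ range (2 * m), A (k + 1) x * A (2 * m - k) x = 0 := by
    have h := hrec (2 * m) x hx
    field_simp at h
    linarith
  rw [sum_range_succ, Nat.sub_self]
  rw [sum_range_two_mul_convolution (A · x)] at hrec_2m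
  linarith
end
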